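/- For η : ℝ² × ℝ² → ℝ Schwartz, the function g(t,x,v) = η(T_ε(t)(x,v)), with T_ε(t)(x,v) = (x + ε v^⊥ − ε R_{−t/ε} v^⊥, R_{−t/ε} v), solves the transport equation ∂_t g + v·∇_x g + (1/ε) v^⊥·∇_v g = 0 with g(0) = η. -/

import Mathlib

open Real

noncomputable def rot (θ : ℝ) (v : EuclideanSpace ℝ (Fin 2)) : EuclideanSpace ℝ (Fin 2) :=
  (WithLp.equiv 2 (Fin 2 → ℝ)).symm ![cos θ * v 0 - sin θ * v 1, sin θ * v 0 + cos θ * v 1]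

noncomputable def perp (v : EuclideanSpace ℝ (Fin 2)) : EuclideanSpace ℝ (Fin 2) :=
  (WithLp.equiv 2 (Fin 2 → ℝ)).symm ![-v 1, v 0]

/-- The flow map T_ε(t). -/
noncomputable def Tmap (ε t : ℝ)
    (p : EuclideanSpace ℝ (Fin 2) × EuclideanSpace ℝ (Fin 2)) :
    EuclideanSpace ℝ (Fin 2) × EuclideanSpace ℝ (Fin 2) :=
  (p.1 + ε • perp p.2 - ε • perp (rot (-t / ε) p.2), rot (-t / ε) p.2)

abbrev E2 := EuclideanSpace ℝ (Fin 2)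

lemma perp_add (a b : E2) : perp (a + b) = perp a + perp b := by
  ext i; fin_cases i <;> simp [perp, WithLp.equiv_symm_apply, PiLp.toLp_apply, PiLp.add_apply] <;> ring

lemma perp_smul (c : ℝ) (a : E2) : perp (c • a) = c • perp a := by
  ext i; fin_cases i <;> simp [perp, WithLp.equiv_symm_apply, PiLp.toLp_apply, PiLp.smul_apply] <;> ring

lemma perp_perp (a : E2) : perp (perp a) = -a := by
  ext i; fin_cases i <;> simp [perp, WithLp.equiv_symm_apply, PiLp.toLp_apply, PiLp.neg_apply]

lemma rot_eq (θ : ℝ) (v : E2) : rot θ v = cos θ • v + sin θ • perp v := by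
  ext i; fin_cases i <;>
    simp [rot, perp, WithLp.equiv_symm_apply, PiLp.toLp_apply, PiLp.add_apply, PiLp.smul_apply] <;> ring

noncomputable def perpL : E2 →L[ℝ] E2 :=
  LinearMap.toContinuousLinearMap
  { toFun := perp
    map_add' := perp_add
    map_smul' := perp_smul }

@[simp] lemma perpL_apply (v : E2) : perpL v = perp v := rfl

lemma perp_zero : perp (0 : E2) = 0 := map_zero perpL

noncomputable def rotL (θ : ℝ) : E2 →L[ℝ] E2 :=
  cos θ • ContinuousLinearMap.id ℝ E2 + sin θ • perpL

lemma rotL_apply (θ : ℝ) (v : E2) : rotL θ v = rot θ v := by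
  simp [rotL, rot_eq, ContinuousLinearMap.add_apply, ContinuousLinearMap.smul_apply]

lemma rot_zero' (θ : ℝ) : rot θ (0 : E2) = 0 := by rw [← rotL_apply]; exact map_zero _

lemma rot_perp (θ : ℝ) (v : E2) : rot θ (perp v) = perp (rot θ v) := by
  rw [rot_eq, rot_eq, perp_add, perp_smul, perp_smul, perp_perp]

noncomputable def TL (ε t : ℝ) : (E2 × E2) →L[ℝ] (E2 × E2) :=
  (ContinuousLinearMap.fst ℝ E2 E2 + ε • perpL.comp (ContinuousLinearMap.snd ℝ E2 E2)
      - ε • (perpL.comp (rotL (-t / ε))).comp (ContinuousLinearMap.snd ℝ E2 E2)).prod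
    ((rotL (-t / ε)).comp (ContinuousLinearMap.snd ℝ E2 E2))

lemma TL_apply (ε t : ℝ) (p : E2 × E2) : TL ε t p = Tmap ε t p := by
  simp [TL, Tmap, rotL_apply, ContinuousLinearMap.prod_apply, ContinuousLinearMap.add_apply,
    ContinuousLinearMap.sub_apply, ContinuousLinearMap.smul_apply, ContinuousLinearMap.comp_apply]

lemma hasDerivAt_rotCurve (ε : ℝ) (v : E2) (t : ℝ) :
    HasDerivAt (fun s => rot (-s / ε) v) (-ε⁻¹ • perp (rot (-t / ε) v)) t := by
  have hθ : HasDerivAt (fun s : ℝ => -s / ε) (-ε⁻¹) t := by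
    simpa [neg_div, Pi.neg_def] using ((hasDerivAt_id t).div_const ε).neg
  have hc : HasDerivAt (fun s => Real.cos (-s / ε)) (-Real.sin (-t / ε) * -ε⁻¹) t :=
    (Real.hasDerivAt_cos _).comp t hθ
  have hs : HasDerivAt (fun s => Real.sin (-s / ε)) (Real.cos (-t / ε) * -ε⁻¹) t :=
    (Real.hasDerivAt_sin _).comp t hθ
  have h := (hc.smul_const v).add (hs.smul_const (perp v))
  have hval : -ε⁻¹ • perp (rot (-t / ε) v)
      = (-Real.sin (-t / ε) * -ε⁻¹) • v + (Real.cos (-t / ε) * -ε⁻¹) • perp v := by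
    rw [rot_eq, perp_add, perp_smul, perp_smul, perp_perp]
    module
  rw [hval]
  simpa only [rot_eq, Pi.add_def] using h

lemma hasDerivAt_curve (ε : ℝ) (hε : ε ≠ 0) (x v : E2) (t : ℝ) :
    HasDerivAt (fun s => Tmap ε s (x, v))
      (-(rot (-t / ε) v), -ε⁻¹ • perp (rot (-t / ε) v)) t := by
  have h1 := hasDerivAt_rotCurve ε v t
  have h2 : HasDerivAt (fun s => perp (rot (-s / ε) v)) (perp (-ε⁻¹ • perp (rot (-t / ε) v))) t :=
    perpL.hasFDerivAt.comp_hasDerivAt t h1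
  have h3 := ((hasDerivAt_const t (x + ε • perp v)).sub (h2.const_smul ε)).prodMk h1
  have hval : (0 - ε • perp (-ε⁻¹ • perp (rot (-t / ε) v)), -ε⁻¹ • perp (rot (-t / ε) v))
      = ((-(rot (-t / ε) v), -ε⁻¹ • perp (rot (-t / ε) v)) : E2 × E2) := by
    rw [Prod.mk.injEq]
    constructor
    · rw [perp_smul, perp_perp, smul_neg, smul_neg, smul_smul]
      field_simp
      simp
    · rfl
  rw [← hval]
  refine h3.congr_of_eventuallyEq (Filter.Eventually.of_forall fun s => ?_)
  simp [Tmap, add_sub_assoc]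

/-- g(t,x,v) = η(T_ε(t)(x,v)) solves
∂_t g + v·∇_x g + (1/ε) v^⊥·∇_v g = 0, g(0) = η. -/
theorem Tmap_solves_transport (ε : ℝ) (hε : 0 < ε)
    (η : SchwartzMap (EuclideanSpace ℝ (Fin 2) × EuclideanSpace ℝ (Fin 2)) ℝ) :
    (∀ (t : ℝ) (x v : EuclideanSpace ℝ (Fin 2)),
      deriv (fun s => η (Tmap ε s (x, v))) t
        + fderiv ℝ (fun x' => η (Tmap ε t (x', v))) x v
        + (1 / ε) * fderiv ℝ (fun v' => η (Tmap ε t (x, v'))) v (perp v) = 0)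
    ∧ ∀ x v : EuclideanSpace ℝ (Fin 2), η (Tmap ε 0 (x, v)) = η (x, v) := by
  have hne : ε ≠ 0 := ne_of_gt hε
  constructor
  · intro t x v
    have hη : HasFDerivAt (⇑η) (fderiv ℝ (⇑η) (Tmap ε t (x, v))) (Tmap ε t (x, v)) :=
      (η.differentiable.differentiableAt).hasFDerivAt
    set D := fderiv ℝ (⇑η) (Tmap ε t (x, v)) with hD
    -- time derivative
    have hc := hasDerivAt_curve ε hne x v t
    have h1 : deriv (fun s => η (Tmap ε s (x, v))) t
        = D (-(rot (-t / ε) v), -ε⁻¹ • perp (rot (-t / ε) v)) :=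
      (hη.comp_hasDerivAt t hc).deriv
    -- x derivative
    have hη' : HasFDerivAt (⇑η) D (TL ε t (x, v)) := by rw [TL_apply]; exact hη
    have hg2 : HasFDerivAt (fun x' => η (Tmap ε t (x', v)))
        (D.comp ((TL ε t).comp (ContinuousLinearMap.inl ℝ E2 E2))) x := by
      have hin : HasFDerivAt (fun x' : E2 => (x', v)) (ContinuousLinearMap.inl ℝ E2 E2) x :=
        hasFDerivAt_prodMk_left x v
      have h := hη'.comp x (((TL ε t).hasFDerivAt).comp x hin)
      simpa [Function.comp_def, TL_apply] using h
    have h2 : fderiv ℝ (fun x' => η (Tmap ε t (x', v))) x v = D (TL ε t (v, 0)) := by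
      rw [hg2.fderiv]; simp
    -- v derivative
    have hg3 : HasFDerivAt (fun v' => η (Tmap ε t (x, v')))
        (D.comp ((TL ε t).comp (ContinuousLinearMap.inr ℝ E2 E2))) v := by
      have hin : HasFDerivAt (fun v' : E2 => (x, v')) (ContinuousLinearMap.inr ℝ E2 E2) v :=
        hasFDerivAt_prodMk_right x v
      have h := hη'.comp v (((TL ε t).hasFDerivAt).comp v hin)
      simpa [Function.comp_def, TL_apply] using h
    have h3 : fderiv ℝ (fun v' => η (Tmap ε t (x, v'))) v (perp v)
        = D (TL ε t (0, perp v)) := by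
      rw [hg3.fderiv]; simp
    rw [h1, h2, h3, ← smul_eq_mul, ← map_smul D (1/ε), ← map_add, ← map_add]
    have hvec : (-(rot (-t / ε) v), -ε⁻¹ • perp (rot (-t / ε) v)) + TL ε t (v, 0)
        + (1 / ε) • TL ε t (0, perp v) = (0 : E2 × E2) := by
      rw [TL_apply, TL_apply]
      simp only [Tmap, rot_zero', perp_zero, smul_zero, add_zero, sub_zero, rot_perp, perp_perp,
        Prod.ext_iff, Prod.fst_add, Prod.snd_add, Prod.smul_fst, Prod.smul_snd, Prod.fst_zero,
        Prod.snd_zero]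
      constructor <;> [skip; skip] <;> match_scalars <;> field_simp <;> ring
    rw [hvec, map_zero]
  · intro x v
    congr 1
    simp [Tmap, neg_div, rot_eq, cos_zero, sin_zero]
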